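/- arXiv:0908.1146 — 2 statements merged into one kernel-verified Lean document; each statement's English description precedes it below -/
import Mathlib

section
/- The additive action of ℂ on Y = {(x,y,z) ∈ ℂ³ : x²·z − y² + 1 = 0} given by t·(x,y,z) = (x, y + x²·t, z + 2y·t + x²·t²) is free: if t·p = p for some point p ∈ Y, then t = 0. -/
def actY (t : ℂ) (p : ℂ × ℂ × ℂ) : ℂ × ℂ × ℂ :=
  (p.1, p.2.1 + p.1 ^ 2 * t, p.2.2 + 2 * p.2.1 * t + p.1 ^ 2 * t ^ 2)

/-- The additive `ℂ`-action `t·(x,y,z) = (x, y + x²t, z + 2yt + x²t²)` on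
`Y = {x²z − y² + 1 = 0}` is free: if `t` fixes a point of `Y` then `t = 0`. -/
theorem actY_free :
    ∀ (t : ℂ) (p : ℂ × ℂ × ℂ), p.1 ^ 2 * p.2.2 - p.2.1 ^ 2 + 1 = 0 →
      actY t p = p → t = 0 := by
  rintro t ⟨x, y, z⟩ hY hfix
  simp only [actY, Prod.mk.injEq] at hfix
  obtain ⟨-, h2, h3⟩ := hfix
  have h2' : x ^ 2 * t = 0 := by linear_combination h2
  by_cases hx : x = 0
  · subst hx
    have hy : y ≠ 0 := by
      intro h; subst h; norm_num at hY
    have : 2 * y * t = 0 := by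
      linear_combination h3
    rcases mul_eq_zero.mp this with h | h
    · rcases mul_eq_zero.mp h with h | h
      · norm_num at h
      · exact absurd h hy
    · exact h
  · have hx2 : x ^ 2 ≠ 0 := pow_ne_zero _ hx
    exact (mul_eq_zero.mp h2').resolve_left hx2
end

section
/- Let R = ℂ[x,y,z]/(xz − y² + 1) be the coordinate ring of the Danielewski surface X. Then the module of Kähler differentials Ω_{R/ℂ} is a free R-module of rank 2; explicitly, the relation z·dx + x·dz − 2y·dy = 0 holds in Ω_{R/ℂ}, and one can exhibit two elements of Ω_{R/ℂ} forming an R-basis. -/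
/-!
Write `x, y, z` for the images of the variables in `R`. The presentation of `R` by one equation
presents `Ω[R⁄ℂ]` by the generators `dx, dy, dz` and the single relation
`v = z dx - 2y dy + x dz`. Since `y² - xz = 1` and `2` is a unit, the relation vector is
unimodular: `λ(a) = -x a₀ - (y/2) a₁` satisfies `λ(v) = 1`. Hence `0 → R → R³ → R² → 0` splits,
and `Ω[R⁄ℂ]` is free on `ω₁ = -y dx + 2x dy` and `ω₂ = dz`.
-/

open MvPolynomial

/-- The defining polynomial `xz − y² + 1` of the Danielewski surface `X`. -/
noncomputable def fX : MvPolynomial (Fin 3) ℂ := X 0 * X 2 - X 1 ^ 2 + 1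

/-- The coordinate ring `R = ℂ[x,y,z]/(xz − y² + 1)` of `X`. -/
abbrev RX := MvPolynomial (Fin 3) ℂ ⧸ Ideal.span {fX}

noncomputable def mkX : MvPolynomial (Fin 3) ℂ →+* RX := Ideal.Quotient.mk _

namespace Module.Relations.Solution

variable {A : Type*} [CommRing A] {relations : Relations A} {M : Type*} [AddCommGroup M]
  [Module A M] {solution : relations.Solution M}

theorem isPresentation_of_section (s : M →ₗ[A] relations.G →₀ A)
    (hs : ∀ m, solution.π (s m) = m)
    (hker : ∀ a, a - s (solution.π a) ∈ Submodule.span A (Set.range relations.relation)) :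
    solution.IsPresentation := by
  refine isPresentation_mk _ ?_ (le_antisymm (fun a ha ↦ ?_) solution.span_relation_le_ker_π)
  · rw [← surjective_π_iff_span_eq_top]
    exact fun m ↦ ⟨s m, hs m⟩
  · simpa [LinearMap.mem_ker.mp ha] using hker a

end Module.Relations.Solution

namespace Algebra.Presentation

variable {R σ : Type*} [CommRing R]

noncomputable def hypersurface (f : MvPolynomial σ R) :
    Presentation R (MvPolynomial σ R ⧸ Ideal.span {f}) σ Unit where
  __ := Generators.naive
  relation _ := f
  span_range_relation_eq_ker := by rw [Set.range_const, Generators.ker_naive]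

theorem hypersurface_differentialsRelations_relation (f : MvPolynomial σ R) (i : σ) :
    (hypersurface f).differentialsRelations.relation () i = Ideal.Quotient.mk _ (pderiv i f) := by
  change Ideal.Quotient.mk _
    ((KaehlerDifferential.mvPolynomialBasis R σ).repr (KaehlerDifferential.D _ _ f) i) = _
  rw [KaehlerDifferential.mvPolynomialBasis_repr_apply]

end Algebra.Presentation

namespace Danielewski

variable {A : Type*} [CommRing A] (x y z : A)

noncomputable def relation : Fin 3 →₀ A :=
  Finsupp.single 0 z + Finsupp.single 1 (-(2 * y)) + Finsupp.single 2 x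

noncomputable def basisLift : (Fin 2 → A) →ₗ[A] Fin 3 →₀ A :=
  Fintype.linearCombination A
    ![Finsupp.single 0 (-y) + Finsupp.single 1 (2 * x), Finsupp.single 2 1]

variable [Invertible (2 : A)]

/-- Row `i` holds the coordinates of `dxᵢ` in the basis `ω₁ = -y dx + 2x dy`, `ω₂ = dz`. -/
noncomputable def coord : Fin 3 → Fin 2 → A :=
  ![![-y, x ^ 2], ![-(⅟2 * z), ⅟2 * x * y], ![0, 1]]

variable {x y z}

theorem linearCombination_coord (a : Fin 3 →₀ A) :
    Finsupp.linearCombination A (coord x y z) a =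
      a 0 • coord x y z 0 + a 1 • coord x y z 1 + a 2 • coord x y z 2 := by
  simp [Finsupp.linearCombination_apply, Finsupp.sum_fintype, Fin.sum_univ_three]

theorem linearCombination_coord_relation (h : x * z - y ^ 2 + 1 = 0) :
    Finsupp.linearCombination A (coord x y z) (relation x y z) = 0 := by
  rw [linearCombination_coord]
  ext j
  fin_cases j <;> simp [relation, coord]
  · linear_combination (y * z) * mul_invOf_self (2 : A)
  · linear_combination (-(x * y ^ 2)) * mul_invOf_self (2 : A) + x * h

theorem linearCombination_coord_basisLift (h : x * z - y ^ 2 + 1 = 0) (u : Fin 2 → A) :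
    Finsupp.linearCombination A (coord x y z) (basisLift x y u) = u := by
  rw [linearCombination_coord]
  ext j
  fin_cases j <;> simp [basisLift, coord, Fintype.linearCombination_apply, Fin.sum_univ_two]
  · linear_combination (-(x * z * u 0)) * mul_invOf_self (2 : A) - u 0 * h
  · linear_combination (x ^ 2 * y * u 0) * mul_invOf_self (2 : A)

theorem sub_basisLift_mem_span (h : x * z - y ^ 2 + 1 = 0) (a : Fin 3 →₀ A) :
    a - basisLift x y (Finsupp.linearCombination A (coord x y z) a) ∈ A ∙ relation x y z := by
  refine Submodule.mem_span_singleton.mpr ⟨-x * a 0 - ⅟2 * y * a 1, ?_⟩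
  rw [linearCombination_coord]
  ext i
  fin_cases i <;>
    simp [basisLift, coord, relation, Fintype.linearCombination_apply, Fin.sum_univ_two]
  · linear_combination (-a 0) * h
  · linear_combination (-a 1) * h - ((x * z - y ^ 2) * a 1) * mul_invOf_self (2 : A)
  · ring

end Danielewski

open Algebra.Presentation

noncomputable instance : Invertible (2 : RX) :=
  (Invertible.map (algebraMap ℂ RX) 2).copy 2 (map_ofNat _ _).symm

theorem mkX_equation : mkX (X 0) * mkX (X 2) - mkX (X 1) ^ 2 + 1 = 0 := by
  have h : mkX fX = 0 := Ideal.Quotient.eq_zero_iff_mem.mpr (Ideal.mem_span_singleton_self fX)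
  simpa only [fX, map_add, map_sub, map_mul, map_pow, map_one] using h

theorem hypersurface_fX_differentialsRelations_relation :
    (hypersurface fX).differentialsRelations.relation () =
      Danielewski.relation (mkX (X 0)) (mkX (X 1)) (mkX (X 2)) := by
  refine Finsupp.ext fun i ↦ (hypersurface_differentialsRelations_relation fX i).trans ?_
  -- the index type of the relations is `Fin 3` only up to unfolding
  change Fin 3 at i
  show mkX (pderiv i fX) = (Danielewski.relation (mkX (X 0)) (mkX (X 1)) (mkX (X 2)) : Fin 3 →₀ RX) i
  fin_cases i <;> simp [Danielewski.relation, fX, pderiv_X, map_ofNat]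

noncomputable def solutionRX : (hypersurface fX).differentialsRelations.Solution (Fin 2 → RX) where
  var := Danielewski.coord (mkX (X 0)) (mkX (X 1)) (mkX (X 2))
  linearCombination_var_relation _ :=
    (congrArg (Finsupp.linearCombination RX (Danielewski.coord _ _ _))
      hypersurface_fX_differentialsRelations_relation).trans
      (Danielewski.linearCombination_coord_relation mkX_equation)

theorem solutionRX_isPresentation : solutionRX.IsPresentation :=
  Module.Relations.Solution.isPresentation_of_section (Danielewski.basisLift _ _)
    (Danielewski.linearCombination_coord_basisLift mkX_equation) fun a ↦
    Submodule.span_mono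
      (Set.singleton_subset_iff.mpr
        (Set.mem_range.mpr ⟨(), hypersurface_fX_differentialsRelations_relation⟩))
      (Danielewski.sub_basisLift_mem_span mkX_equation a)

/-- For `R = ℂ[x,y,z]/(xz − y² + 1)`, the module of Kähler differentials `Ω_{R/ℂ}`
satisfies the relation `z·dx + x·dz − 2y·dy = 0` and is a free `R`-module of rank 2. -/
theorem kaehler_RX_free_rank_two :
    (mkX (X 2) • (KaehlerDifferential.D ℂ RX) (mkX (X 0)) +
      mkX (X 0) • (KaehlerDifferential.D ℂ RX) (mkX (X 2)) -
      (2 * mkX (X 1)) • (KaehlerDifferential.D ℂ RX) (mkX (X 1)) = 0) ∧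
    Nonempty (Module.Basis (Fin 2) RX (Ω[RX⁄ℂ])) := by
  have hrel : Finsupp.linearCombination RX (fun i ↦ KaehlerDifferential.D ℂ RX (mkX (X i)))
      (Danielewski.relation (mkX (X 0)) (mkX (X 1)) (mkX (X 2))) = 0 :=
    hypersurface_fX_differentialsRelations_relation ▸
      (hypersurface fX).differentialsSolution.π_relation ()
  simp only [Danielewski.relation, map_add, Finsupp.linearCombination_single] at hrel
  refine ⟨by linear_combination (norm := module) hrel, ⟨(Pi.basisFun RX (Fin 2)).map ?_⟩⟩
  exact ((hypersurface fX).differentialsSolution_isPresentation.uniq solutionRX_isPresentation).symm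
end
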